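/- arXiv:2502.06785 — 6 statements merged into one kernel-verified Lean document; each statement's English description precedes it below -/
import Mathlib

section
/- Let M ∈ ℝ^{d×d} have rank r, and suppose r₁,...,r_T are positive integers with r ≤ ∑ r_t. Then there exist matrices V₁,...,V_T ∈ ℝ^{d×d} with rank(V_t) ≤ r_t such that I + M = ∏_{t=1}^T (I + V_t), provided at each induction step the relevant matrix I + Q₁ᵀP₁ is invertible. -/
open Matrix

variable {d : ℕ}

lemma myVecMulVec_mulVec (u v x : Fin d → ℝ) :
    (vecMulVec u v).mulVec x = (v ⬝ᵥ x) • u := by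
  ext i
  simp only [mulVec, dotProduct, vecMulVec_apply, Pi.smul_apply, smul_eq_mul,
    Finset.sum_mul]
  exact Finset.sum_congr rfl fun k _ => by ring

lemma myVecMulVec_mul (u v : Fin d → ℝ) (M : Matrix (Fin d) (Fin d) ℝ) :
    (vecMulVec u v) * M = vecMulVec u (M.vecMul v) := by
  ext i j
  simp only [mul_apply, vecMulVec_apply, vecMul, dotProduct, Finset.mul_sum]
  exact Finset.sum_congr rfl fun k _ => by ring

lemma myVecMulVec_smul_right (u v : Fin d → ℝ) (c : ℝ) :
    vecMulVec u (c • v) = c • vecMulVec u v := by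
  ext i j
  simp [vecMulVec_apply]
  ring

lemma myVecMulVec_neg_right (u v : Fin d → ℝ) :
    vecMulVec u (-v) = -vecMulVec u v := by
  ext i j
  simp [vecMulVec_apply]

lemma myRank_vecMulVec_le (u v : Fin d → ℝ) :
    (vecMulVec u v).rank ≤ 1 := by
  rw [vecMulVec_eq Unit]
  exact (rank_mul_le_left _ _).trans ((rank_le_card_width _).trans_eq Fintype.card_unit)

lemma myRank_lt (A B : Matrix (Fin d) (Fin d) ℝ)
    (hker : ∀ x, A.mulVec x = 0 → B.mulVec x = 0)
    (w : Fin d → ℝ) (hw1 : B.mulVec w = 0) (hw2 : A.mulVec w ≠ 0) :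
    B.rank < A.rank := by
  have hle : LinearMap.ker A.mulVecLin < LinearMap.ker B.mulVecLin := by
    refine SetLike.lt_iff_le_and_exists.mpr ⟨fun x hx => ?_, w, ?_, ?_⟩
    · exact LinearMap.mem_ker.mpr (hker x (LinearMap.mem_ker.mp hx))
    · exact LinearMap.mem_ker.mpr hw1
    · exact fun h => hw2 (LinearMap.mem_ker.mp h)
  have h1 := Submodule.finrank_lt_finrank_of_lt hle
  have h2 := LinearMap.finrank_range_add_finrank_ker A.mulVecLin
  have h3 := LinearMap.finrank_range_add_finrank_ker B.mulVecLin
  rw [Matrix.rank, Matrix.rank]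
  omega

lemma myExists_dot (X : Matrix (Fin d) (Fin d) ℝ) (hX : X ≠ 0) :
    ∃ z w : Fin d → ℝ, z ⬝ᵥ X.mulVec w ≠ 0 := by
  have : ∃ i j, X i j ≠ 0 := by
    by_contra h
    push_neg at h
    exact hX (by ext i j; simpa using h i j)
  obtain ⟨i, j, hij⟩ := this
  refine ⟨Pi.single i 1, Pi.single j 1, ?_⟩
  simpa [dotProduct, mulVec, Pi.single_apply, Finset.mul_sum] using hij

open Polynomial in
lemma myExists_t (a₀ a₁ a₂ b₀ b₁ b₂ : ℝ) (h0 : a₀ ≠ 0) (h2 : b₂ ≠ 0) :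
    ∃ t : ℝ, a₀ + a₁ * t + a₂ * t ^ 2 ≠ 0 ∧ b₀ + b₁ * t + b₂ * t ^ 2 ≠ 0 := by
  set P : ℝ[X] := C a₀ + C a₁ * X + C a₂ * X ^ 2 with hP
  set Q : ℝ[X] := C b₀ + C b₁ * X + C b₂ * X ^ 2 with hQ
  have hPne : P ≠ 0 := fun h => h0 (by
    have := congrArg (eval 0) h
    simpa [hP] using this)
  have hQne : Q ≠ 0 := fun h => h2 (by
    have := congrArg (fun p => coeff p 2) h
    simpa [hQ, coeff_C] using this)
  have hne : {x : ℝ | (P * Q).IsRoot x} ≠ Set.univ := by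
    intro h
    exact mul_ne_zero hPne hQne
      ((P * Q).eq_zero_of_infinite_isRoot (h ▸ Set.infinite_univ))
  obtain ⟨t, ht⟩ := Set.ne_univ_iff_exists_notMem _ |>.mp hne
  simp only [Set.mem_setOf_eq, IsRoot, eval_mul, mul_eq_zero, not_or] at ht
  refine ⟨t, ?_, ?_⟩
  · simpa [hP] using ht.1
  · simpa [hQ] using ht.2

lemma myExists_wz (M N : Matrix (Fin d) (Fin d) ℝ) (hM : M ≠ 0) (hN : N ≠ 0) :
    ∃ z w : Fin d → ℝ, z ⬝ᵥ M.mulVec w ≠ 0 ∧ z ⬝ᵥ N.mulVec w ≠ 0 := by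
  obtain ⟨z₁, w₁, h1⟩ := myExists_dot M hM
  obtain ⟨z₂, w₂, h2⟩ := myExists_dot N hN
  obtain ⟨t, ha, hb⟩ := myExists_t (z₁ ⬝ᵥ M.mulVec w₁)
    (z₁ ⬝ᵥ M.mulVec w₂ + z₂ ⬝ᵥ M.mulVec w₁) (z₂ ⬝ᵥ M.mulVec w₂)
    (z₁ ⬝ᵥ N.mulVec w₁) (z₁ ⬝ᵥ N.mulVec w₂ + z₂ ⬝ᵥ N.mulVec w₁) (z₂ ⬝ᵥ N.mulVec w₂)
    h1 h2
  refine ⟨z₁ + t • z₂, w₁ + t • w₂, ?_, ?_⟩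
  · convert ha using 1
    simp [mulVec_add, mulVec_smul, dotProduct_add, add_dotProduct, smul_dotProduct,
      dotProduct_smul]
    ring
  · convert hb using 1
    simp [mulVec_add, mulVec_smul, dotProduct_add, add_dotProduct, smul_dotProduct,
      dotProduct_smul]
    ring

lemma myVecMul_vecMulVec (x u v : Fin d → ℝ) :
    (vecMulVec u v).vecMul x = (x ⬝ᵥ u) • v := by
  ext j
  simp only [vecMul, dotProduct, vecMulVec_apply, Pi.smul_apply, smul_eq_mul, Finset.sum_mul]
  exact Finset.sum_congr rfl fun k _ => by ring

lemma myDot_MM (M : Matrix (Fin d) (Fin d) ℝ) (z w : Fin d → ℝ) :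
    (M.vecMul z) ⬝ᵥ (M.mulVec w) = z ⬝ᵥ (M * M).mulVec w := by
  rw [dotProduct_mulVec, dotProduct_mulVec, vecMul_vecMul]

lemma myRank_sub_lt (M : Matrix (Fin d) (Fin d) ℝ) (z w : Fin d → ℝ)
    (hσ : z ⬝ᵥ M.mulVec w ≠ 0) :
    (M - vecMulVec ((z ⬝ᵥ M.mulVec w)⁻¹ • M.mulVec w) (M.vecMul z)).rank < M.rank := by
  apply myRank_lt
  · intro x hx
    have h1 : M.vecMul z ⬝ᵥ x = z ⬝ᵥ M.mulVec x := (dotProduct_mulVec z M x).symm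
    rw [sub_mulVec, myVecMulVec_mulVec, h1, hx]
    simp
  · have h2 : M.vecMul z ⬝ᵥ w = z ⬝ᵥ M.mulVec w := (dotProduct_mulVec z M w).symm
    rw [sub_mulVec, myVecMulVec_mulVec, h2, smul_smul, mul_inv_cancel₀ hσ, one_smul, sub_self]
  · intro h
    rw [h] at hσ
    simp at hσ

lemma myStep (M : Matrix (Fin d) (Fin d) ℝ) (hM : M ≠ 0) :
    ∃ (u v : Fin d → ℝ) (M' : Matrix (Fin d) (Fin d) ℝ),
      1 + M = (1 + vecMulVec u v) * (1 + M') ∧ M'.rank < M.rank := by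
  by_cases hN : M * M + M = 0
  · -- projection-like case
    obtain ⟨z, w, hσ⟩ := myExists_dot M hM
    set σ := z ⬝ᵥ M.mulVec w with hσdef
    set u := σ⁻¹ • M.mulVec w with hu
    set v := M.vecMul z with hv
    set V := vecMulVec u v with hV
    have hMM : M * M = -M := by
      have := hN
      linear_combination (norm := abel) this
    have hvu : v ⬝ᵥ u = -1 := by
      rw [hu, dotProduct_smul, hv, myDot_MM, hMM, smul_eq_mul]
      simp only [neg_mulVec, dotProduct_neg, ← hσdef]
      field_simp
    have hVM : V * M = -V := by
      rw [hV, myVecMulVec_mul, hv, vecMul_vecMul, hMM]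
      rw [show M.vecMul z = z ᵥ* M from rfl]
      rw [show z ᵥ* (-M) = -(z ᵥ* M) from by simp [vecMul_neg]]
      exact myVecMulVec_neg_right _ _
    have hVV : V * V = -V := by
      rw [hV, myVecMulVec_mul, myVecMul_vecMulVec, hvu]
      rw [myVecMulVec_smul_right]
      simp
    refine ⟨u, v, M - V, ?_, ?_⟩
    · have expand : (1 + V) * (1 + (M - V)) = 1 + M + (V * M - V * V) := by
        noncomm_ring
      rw [expand, hVM, hVV, sub_self, add_zero]
    · exact myRank_sub_lt M z w hσ
  · -- generic case
    obtain ⟨z, w, hσ, hτ⟩ := myExists_wz M (M * M + M) hM hN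
    set σ := z ⬝ᵥ M.mulVec w with hσdef
    set u := σ⁻¹ • M.mulVec w with hu
    set v := M.vecMul z with hv
    set V := vecMulVec u v with hV
    set c := 1 + v ⬝ᵥ u with hc
    have hvu : v ⬝ᵥ u = σ⁻¹ * (z ⬝ᵥ (M * M).mulVec w) := by
      rw [hu, dotProduct_smul, hv, myDot_MM, smul_eq_mul]
    have hcz : c = σ⁻¹ * (z ⬝ᵥ (M * M + M).mulVec w) := by
      rw [hc, hvu, add_mulVec, dotProduct_add, mul_add, ← hσdef, inv_mul_cancel₀ hσ]
      ring
    have hcne : c ≠ 0 := by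
      rw [hcz]
      exact mul_ne_zero (inv_ne_zero hσ) hτ
    have hVV : V * V = (v ⬝ᵥ u) • V := by
      rw [hV, myVecMulVec_mul, myVecMul_vecMulVec, myVecMulVec_smul_right]
    have key : (1 + V) * (1 - c⁻¹ • V) = 1 := by
      rw [mul_sub, mul_one, mul_smul_comm, add_mul, one_mul, hVV]
      rw [show V + (v ⬝ᵥ u) • V = c • V from by rw [hc, add_smul, one_smul],
        smul_smul, inv_mul_cancel₀ hcne, one_smul, add_sub_cancel_right]
    refine ⟨u, v, (1 - c⁻¹ • V) * (M - V), ?_, ?_⟩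
    · calc 1 + M = (1 + V) * 1 + (M - V) := by noncomm_ring
        _ = (1 + V) * 1 + ((1 + V) * (1 - c⁻¹ • V)) * (M - V) := by rw [key, one_mul]
        _ = (1 + V) * (1 + (1 - c⁻¹ • V) * (M - V)) := by noncomm_ring
    · exact lt_of_le_of_lt (rank_mul_le_right _ _) (myRank_sub_lt M z w hσ)

lemma myRank_add_le (A B : Matrix (Fin d) (Fin d) ℝ) :
    (A + B).rank ≤ A.rank + B.rank := by
  have hle : LinearMap.range (A + B).mulVecLin ≤
      LinearMap.range A.mulVecLin ⊔ LinearMap.range B.mulVecLin := by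
    rintro x ⟨y, rfl⟩
    rw [mulVecLin_add]
    exact Submodule.add_mem_sup ⟨y, rfl⟩ ⟨y, rfl⟩
  exact (Submodule.finrank_mono hle).trans
    (Submodule.finrank_add_le_finrank_add_finrank _ _)

lemma myRank_eq_zero {M : Matrix (Fin d) (Fin d) ℝ} (h : M.rank = 0) : M = 0 := by
  have : LinearMap.range M.mulVecLin = ⊥ := by
    rw [← Submodule.finrank_eq_zero (R := ℝ)]
    exact h
  have h2 : M.mulVecLin = 0 := LinearMap.range_eq_bot.mp this
  ext i j
  have h3 : M.mulVecLin (Pi.single j 1) = 0 := by rw [h2]; rfl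
  have := congrFun h3 i
  simpa [mulVecLin, mulVec, dotProduct, Pi.single_apply] using this

lemma myKStep (k : ℕ) (M : Matrix (Fin d) (Fin d) ℝ) :
    ∃ V M' : Matrix (Fin d) (Fin d) ℝ,
      V.rank ≤ k ∧ M'.rank ≤ M.rank - k ∧ 1 + M = (1 + V) * (1 + M') := by
  induction k generalizing M with
  | zero => exact ⟨0, M, by simp, by simp, by simp⟩
  | succ k ih =>
    by_cases hM : M = 0
    · exact ⟨0, 0, by simp, by simp [hM], by simp [hM]⟩
    · obtain ⟨u, v, M₁, h1, hr1⟩ := myStep M hM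
      obtain ⟨V', M', hV', hM', h2⟩ := ih M₁
      refine ⟨vecMulVec u v + V' + vecMulVec u v * V', M', ?_, by omega, ?_⟩
      · have heq : vecMulVec u v + V' + vecMulVec u v * V'
            = vecMulVec u v * (1 + V') + V' := by noncomm_ring
        rw [heq]
        have h3 := myRank_add_le (vecMulVec u v * (1 + V')) V'
        have h4 := rank_mul_le_left (vecMulVec u v) (1 + V')
        have h5 := myRank_vecMulVec_le u v
        omega
      · rw [h1, h2, show (1 : Matrix (Fin d) (Fin d) ℝ) + (vecMulVec u v + V' + vecMulVec u v * V')
          = (1 + vecMulVec u v) * (1 + V') from by noncomm_ring, mul_assoc]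

lemma myMain (T : ℕ) : ∀ (r : Fin T → ℕ) (M : Matrix (Fin d) (Fin d) ℝ),
    M.rank ≤ ∑ t : Fin T, r t →
    ∃ V : Fin T → Matrix (Fin d) (Fin d) ℝ,
      (∀ t, (V t).rank ≤ r t) ∧
      (1 : Matrix (Fin d) (Fin d) ℝ) + M
        = (List.ofFn (fun t => (1 : Matrix (Fin d) (Fin d) ℝ) + V t)).prod := by
  induction T with
  | zero =>
    intro r M hM
    simp only [Finset.univ_eq_empty, Finset.sum_empty, Nat.le_zero] at hM
    refine ⟨fun t => 0, fun t => t.elim0, ?_⟩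
    rw [myRank_eq_zero hM]
    simp
  | succ T ih =>
    intro r M hM
    rw [Fin.sum_univ_succ] at hM
    obtain ⟨V₀, M₁, hV₀, hM₁, h1⟩ := myKStep (r 0) M
    obtain ⟨V', hV', h2⟩ := ih (fun t => r t.succ) M₁ (by
      have : M₁.rank ≤ ∑ i : Fin T, r i.succ := by omega
      simpa using this)
    refine ⟨Fin.cons V₀ V', ?_, ?_⟩
    · intro t
      refine Fin.cases ?_ ?_ t
      · simpa using hV₀
      · intro i
        simpa using hV' i
    · rw [List.ofFn_succ]
      simp only [Fin.cons_zero, Fin.cons_succ, List.prod_cons]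
      rw [h1, h2]

/-- Converse expressiveness of linear ResNets: if `rank M ≤ ∑ r t` with each `r t ≥ 1`,
then `I + M` factors as a product `∏ (I + V t)` with `rank (V t) ≤ r t`. -/
theorem one_add_eq_resnet_prod (d T : ℕ) (M : Matrix (Fin d) (Fin d) ℝ)
    (r : Fin T → ℕ) (hr : ∀ t, 1 ≤ r t) (hM : M.rank ≤ ∑ t : Fin T, r t) :
    ∃ V : Fin T → Matrix (Fin d) (Fin d) ℝ,
      (∀ t, (V t).rank ≤ r t) ∧
      (1 : Matrix (Fin d) (Fin d) ℝ) + M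
        = (List.ofFn (fun t => (1 : Matrix (Fin d) (Fin d) ℝ) + V t)).prod := by
  exact myMain T r M hM
end

section
/- Eckart–Young–Mirsky in Frobenius norm: for A ∈ ℝ^{d×d} with singular values σ₁ ≥ ... ≥ σ_d, the minimum of ‖A − M‖_F² over matrices M of rank ≤ r equals ∑_{i=r+1}^d σᵢ². -/
set_option maxHeartbeats 1000000

open Finset Matrix Module

lemma frob_eq_trace {d : ℕ} (X : Matrix (Fin d) (Fin d) ℝ) :
    ∑ i : Fin d, ∑ j : Fin d, (X i j) ^ 2 = (Xᵀ * X).trace := by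
  rw [Matrix.trace]
  simp only [Matrix.diag, Matrix.mul_apply, Matrix.transpose_apply]
  rw [Finset.sum_comm]
  simp [sq]

lemma frob_conj {d : ℕ} (U V X : Matrix (Fin d) (Fin d) ℝ)
    (hU : Uᵀ * U = 1) (hV : Vᵀ * V = 1) :
    ((U * X * Vᵀ)ᵀ * (U * X * Vᵀ)).trace = (Xᵀ * X).trace := by
  have h1 : (U * X * Vᵀ)ᵀ = V * Xᵀ * Uᵀ := by
    simp [Matrix.transpose_mul, Matrix.mul_assoc]
  have h2 : V * Xᵀ * Uᵀ * (U * X * Vᵀ) = V * (Xᵀ * X) * Vᵀ := by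
    rw [show V * Xᵀ * Uᵀ * (U * X * Vᵀ) = V * Xᵀ * (Uᵀ * U) * (X * Vᵀ) from by noncomm_ring,
      hU]
    noncomm_ring
  rw [h1, h2, Matrix.trace_mul_comm,
    show Vᵀ * (V * (Xᵀ * X)) = (Vᵀ * V) * (Xᵀ * X) from by noncomm_ring, hV, one_mul]

lemma card_flt {d r : ℕ} (hrd : r ≤ d) :
    (Finset.univ.filter (fun j : Fin d => (j : ℕ) < r)).card = r := by
  have h : Finset.univ.filter (fun j : Fin d => (j : ℕ) < r)
      = Finset.univ.map (Fin.castLEEmb hrd) := by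
    ext j
    simp only [Finset.mem_filter, Finset.mem_univ, true_and, Finset.mem_map,
      Fin.castLEEmb, Function.Embedding.coeFn_mk]
    constructor
    · intro h; exact ⟨⟨j, h⟩, rfl⟩
    · rintro ⟨a, rfl⟩; exact a.2
  rw [h, Finset.card_map, Finset.card_univ, Fintype.card_fin]

lemma card_fle {d r : ℕ} (hrd : r ≤ d) :
    (Finset.univ.filter (fun j : Fin d => r ≤ (j : ℕ))).card = d - r := by
  have h := Finset.card_filter_add_card_filter_not
    (s := (Finset.univ : Finset (Fin d))) (p := fun j : Fin d => (j : ℕ) < r)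
  have h2 : (Finset.univ.filter (fun j : Fin d => ¬ (j : ℕ) < r))
      = Finset.univ.filter (fun j : Fin d => r ≤ (j : ℕ)) := by
    apply Finset.filter_congr; intro j _; simp [Nat.not_lt]
  rw [card_flt hrd, h2, Finset.card_univ, Fintype.card_fin] at h
  omega

lemma weight_ineq {d r : ℕ} (hrd : r < d) (σ : Fin d → ℝ) (hσ : Antitone σ)
    (hσ0 : ∀ i, 0 ≤ σ i) (t : Fin d → ℝ) (ht0 : ∀ j, 0 ≤ t j) (ht1 : ∀ j, t j ≤ 1)
    (hts : ∑ j, t j = (d : ℝ) - r) :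
    ∑ j ∈ Finset.univ.filter (fun j : Fin d => r ≤ (j : ℕ)), σ j ^ 2
      ≤ ∑ j, σ j ^ 2 * t j := by
  set c : ℝ := σ ⟨r, hrd⟩ ^ 2 with hc
  have hc0 : 0 ≤ c := sq_nonneg _
  have key : ∀ j : Fin d,
      (if r ≤ (j : ℕ) then σ j ^ 2 else 0) + c * t j
        - c * (if r ≤ (j : ℕ) then (1 : ℝ) else 0) ≤ σ j ^ 2 * t j := by
    intro j
    by_cases h : r ≤ (j : ℕ)
    · simp only [if_pos h]
      have h1 : σ j ^ 2 ≤ c := by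
        have hle : (⟨r, hrd⟩ : Fin d) ≤ j := h
        exact pow_le_pow_left₀ (hσ0 j) (hσ hle) 2
      nlinarith [ht1 j, ht0 j]
    · simp only [if_neg h]
      have h1 : c ≤ σ j ^ 2 := by
        have hle : j ≤ (⟨r, hrd⟩ : Fin d) := by
          simp only [Fin.le_def]; omega
        exact pow_le_pow_left₀ (hσ0 _) (hσ hle) 2
      nlinarith [ht0 j]
  have hsum := Finset.sum_le_sum (fun j (_ : j ∈ Finset.univ) => key j)
  have h1 : ∑ j : Fin d, ((if r ≤ (j : ℕ) then σ j ^ 2 else 0) + c * t j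
        - c * (if r ≤ (j : ℕ) then (1 : ℝ) else 0))
      = ∑ j ∈ Finset.univ.filter (fun j : Fin d => r ≤ (j : ℕ)), σ j ^ 2 := by
    rw [Finset.sum_sub_distrib, Finset.sum_add_distrib, ← Finset.mul_sum, ← Finset.mul_sum,
      ← Finset.sum_filter, ← Finset.sum_filter, Finset.sum_const, hts]
    rw [card_fle hrd.le]
    have : ((d - r : ℕ) : ℝ) = (d : ℝ) - r := by
      rw [Nat.cast_sub hrd.le]
    rw [nsmul_eq_mul, mul_one, this]
    ring
  rw [h1] at hsum
  exact hsum

lemma lower_bound {d r : ℕ} (hrd : r < d) (σ : Fin d → ℝ) (hσ : Antitone σ)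
    (hσ0 : ∀ i, 0 ≤ σ i) (B : Matrix (Fin d) (Fin d) ℝ) (hB : B.rank ≤ r) :
    ∑ j ∈ Finset.univ.filter (fun j : Fin d => r ≤ (j : ℕ)), σ j ^ 2 ≤
      ((Matrix.diagonal σ - B)ᵀ * (Matrix.diagonal σ - B)).trace := by
  classical
  set X := Matrix.diagonal σ - B with hX
  set K : Submodule ℝ (EuclideanSpace ℝ (Fin d)) :=
    (LinearMap.ker B.mulVecLin).map ((WithLp.linearEquiv 2 ℝ (Fin d → ℝ)).symm :
        (Fin d → ℝ) →ₗ[ℝ] EuclideanSpace ℝ (Fin d)) with hK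
  have hKeq : K = (LinearMap.ker B.mulVecLin).map
      ((WithLp.linearEquiv 2 ℝ (Fin d → ℝ)).symm :
        (Fin d → ℝ) →ₗ[ℝ] EuclideanSpace ℝ (Fin d)) := rfl
  have hKd : d - r ≤ Module.finrank ℝ K := by
    rw [hKeq, LinearEquiv.finrank_map_eq (WithLp.linearEquiv 2 ℝ (Fin d → ℝ)).symm]
    have h1 := LinearMap.finrank_range_add_finrank_ker B.mulVecLin
    have h2 : Module.finrank ℝ (Fin d → ℝ) = d := by simp
    have h3 : Module.finrank ℝ (LinearMap.range B.mulVecLin) = B.rank := rfl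
    omega
  have hmemK : ∀ x : EuclideanSpace ℝ (Fin d), x ∈ K →
      B.mulVec (fun j => x j) = 0 := by
    intro x hx
    rw [hKeq, Submodule.mem_map_equiv] at hx
    exact hx
  -- orthonormal basis with first d - r vectors in K
  obtain ⟨b, hb⟩ : ∃ b : OrthonormalBasis (Fin d) ℝ (EuclideanSpace ℝ (Fin d)),
      ∀ i : Fin d, (i : ℕ) < d - r → (b i : EuclideanSpace ℝ (Fin d)) ∈ K := by
    set c := stdOrthonormalBasis ℝ K with hcdef
    set v : Fin d → EuclideanSpace ℝ (Fin d) := fun i =>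
      if h : (i : ℕ) < d - r then (c ⟨i, lt_of_lt_of_le h hKd⟩ : EuclideanSpace ℝ (Fin d))
      else 0 with hv
    have hvo : Orthonormal ℝ (Set.restrict {i : Fin d | (i : ℕ) < d - r} v) := by
      rw [orthonormal_iff_ite]
      rintro ⟨i, hi⟩ ⟨j, hj⟩
      have hi' : (i : ℕ) < d - r := hi
      have hj' : (j : ℕ) < d - r := hj
      simp only [Set.restrict_apply, Set.restrict, hv, dif_pos hi', dif_pos hj']
      rw [← Submodule.coe_inner, orthonormal_iff_ite.mp c.orthonormal]
      by_cases h : i = j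
      · subst h; simp
      · rw [if_neg, if_neg]
        · simp only [ne_eq, Subtype.mk.injEq]; exact h
        · intro hcon
          apply h
          have := congrArg (Fin.val) hcon
          simpa [Fin.ext_iff] using this
    obtain ⟨b, hb⟩ := hvo.exists_orthonormalBasis_extension_of_card_eq (by simp)
    refine ⟨b, fun i hi => ?_⟩
    rw [hb i hi]
    simp only [hv, dif_pos hi]
    exact (c _).2
  set Q : Matrix (Fin d) (Fin d) ℝ := Matrix.of fun j i => b i j with hQ
  have hQ1 : Qᵀ * Q = 1 := by
    ext i k
    simp only [hQ, Matrix.mul_apply, Matrix.transpose_apply, Matrix.one_apply,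
      Matrix.of_apply]
    have h := orthonormal_iff_ite.mp b.orthonormal i k
    rw [PiLp.inner_apply] at h
    simp only [RCLike.inner_apply, conj_trivial] at h
    rw [← h]; exact Finset.sum_congr rfl fun _ _ => mul_comm _ _
  have hQ2 : Q * Qᵀ = 1 := mul_eq_one_comm.mp hQ1
  have htr : (Xᵀ * X).trace = ∑ i : Fin d, ∑ j : Fin d, ((X * Q) j i) ^ 2 := by
    have h2 : ((X * Q)ᵀ * (X * Q)).trace = (Xᵀ * X).trace := by
      rw [Matrix.transpose_mul,
        show Qᵀ * Xᵀ * (X * Q) = Qᵀ * (Xᵀ * X) * Q from by noncomm_ring,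
        Matrix.trace_mul_comm,
        show Q * (Qᵀ * (Xᵀ * X)) = (Q * Qᵀ) * (Xᵀ * X) from by noncomm_ring, hQ2, one_mul]
    have h3 := frob_eq_trace (X * Q)
    rw [h2] at h3
    rw [← h3]
    exact Finset.sum_comm
  have hle : d - r ≤ d := by omega
  have hcol : ∀ i : Fin (d - r), ∀ j : Fin d,
      (X * Q) j (Fin.castLE hle i) = σ j * Q j (Fin.castLE hle i) := by
    intro i j
    have hi' : ((Fin.castLE hle i : Fin d) : ℕ) < d - r := i.isLt
    have hker : B.mulVec (fun k => Q k (Fin.castLE hle i)) = 0 :=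
      hmemK _ (hb (Fin.castLE hle i) hi')
    have h0 : ∑ k, B j k * Q k (Fin.castLE hle i) = 0 := by
      have := congrFun hker j
      simpa [Matrix.mulVec, dotProduct] using this
    rw [hX, Matrix.sub_mul, Matrix.sub_apply, Matrix.mul_apply, Matrix.mul_apply, h0,
      sub_zero]
    simp [Matrix.diagonal_apply, ite_mul]
  set t : Fin d → ℝ := fun j => ∑ i : Fin (d - r), Q j (Fin.castLE hle i) ^ 2 with ht
  set S : Finset (Fin d) := Finset.univ.map (Fin.castLEEmb hle) with hS
  have hmap : ∀ f : Fin d → ℝ, ∑ i ∈ S, f i = ∑ i : Fin (d - r), f (Fin.castLE hle i) := by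
    intro f; rw [hS, Finset.sum_map]; rfl
  have ht0 : ∀ j, 0 ≤ t j := by intro j; simp only [ht]; positivity
  have ht1 : ∀ j, t j ≤ 1 := by
    intro j
    have h1 : ∑ i : Fin d, Q j i ^ 2 = 1 := by
      have h : (Q * Qᵀ) j j = 1 := by rw [hQ2]; simp [Matrix.one_apply]
      rw [Matrix.mul_apply] at h
      simpa [sq, Matrix.transpose_apply] using h
    calc t j = ∑ i ∈ S, Q j i ^ 2 := by simp only [ht]; exact (hmap (fun i => Q j i ^ 2)).symm
      _ ≤ ∑ i : Fin d, Q j i ^ 2 :=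
          Finset.sum_le_sum_of_subset_of_nonneg (Finset.subset_univ S)
            (by intros; positivity)
      _ = 1 := h1
  have hts : ∑ j, t j = (d : ℝ) - r := by
    simp only [ht]
    rw [Finset.sum_comm]
    have h1 : ∀ i : Fin (d - r), ∑ j : Fin d, Q j (Fin.castLE hle i) ^ 2 = 1 := by
      intro i
      have h : (Qᵀ * Q) (Fin.castLE hle i) (Fin.castLE hle i) = 1 := by
        rw [hQ1]; simp [Matrix.one_apply]
      rw [Matrix.mul_apply] at h
      simpa [sq, Matrix.transpose_apply] using h
    rw [Finset.sum_congr rfl (fun i _ => h1 i), Finset.sum_const, Finset.card_univ,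
      Fintype.card_fin, nsmul_eq_mul, mul_one, Nat.cast_sub hrd.le]
  calc ∑ j ∈ Finset.univ.filter (fun j : Fin d => r ≤ (j : ℕ)), σ j ^ 2
      ≤ ∑ j, σ j ^ 2 * t j := weight_ineq hrd σ hσ hσ0 t ht0 ht1 hts
    _ = ∑ i : Fin (d - r), ∑ j : Fin d, ((X * Q) j (Fin.castLE hle i)) ^ 2 := by
        simp only [ht, Finset.mul_sum]
        rw [Finset.sum_comm]
        refine Finset.sum_congr rfl fun i _ => Finset.sum_congr rfl fun j _ => ?_
        rw [hcol i j]; ring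
    _ = ∑ i ∈ S, ∑ j : Fin d, ((X * Q) j i) ^ 2 :=
        (hmap (fun i => ∑ j : Fin d, ((X * Q) j i) ^ 2)).symm
    _ ≤ ∑ i : Fin d, ∑ j : Fin d, ((X * Q) j i) ^ 2 :=
        Finset.sum_le_sum_of_subset_of_nonneg (Finset.subset_univ S)
          (by intros; positivity)
    _ = (Xᵀ * X).trace := htr.symm

/-- Eckart–Young–Mirsky in Frobenius norm: if `A = U diag(σ) Vᵀ` is a singular value
decomposition of `A` (with `U, V` orthogonal and `σ₁ ≥ ... ≥ σ_d ≥ 0`), then the minimum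
of `‖A − M‖_F²` over matrices `M` of rank `≤ r` equals `∑_{i>r} σᵢ²`. -/
theorem eckart_young_mirsky (d r : ℕ) (A U V : Matrix (Fin d) (Fin d) ℝ)
    (σ : Fin d → ℝ) (hσ : Antitone σ) (hσ0 : ∀ i, 0 ≤ σ i)
    (hU : U.transpose * U = 1) (hV : V.transpose * V = 1)
    (hA : A = U * Matrix.diagonal σ * V.transpose) :
    IsLeast
      {v : ℝ | ∃ M : Matrix (Fin d) (Fin d) ℝ, M.rank ≤ r ∧
        v = ∑ i : Fin d, ∑ j : Fin d, ((A - M) i j) ^ 2}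
      (∑ i ∈ Finset.univ.filter (fun i : Fin d => r ≤ (i : ℕ)), σ i ^ 2) := by
  classical
  constructor
  · -- membership : truncated SVD
    refine ⟨U * Matrix.diagonal (fun i : Fin d => if (i : ℕ) < r then σ i else 0) * Vᵀ, ?_, ?_⟩
    · calc (U * Matrix.diagonal (fun i : Fin d => if (i : ℕ) < r then σ i else 0) * Vᵀ).rank
          ≤ (U * Matrix.diagonal (fun i : Fin d => if (i : ℕ) < r then σ i else 0)).rank :=
            Matrix.rank_mul_le_left _ _
        _ ≤ (Matrix.diagonal (fun i : Fin d => if (i : ℕ) < r then σ i else 0)).rank :=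
            Matrix.rank_mul_le_right _ _
        _ ≤ r := by
            rw [Matrix.rank_diagonal]
            have hinj : Function.Injective
                (fun s : {i : Fin d // (if (i : ℕ) < r then σ i else 0) ≠ 0} =>
                  (⟨(s : Fin d), by
                    rcases s with ⟨i, hi⟩
                    by_contra hc
                    exact hi (if_neg hc)⟩ : Fin r)) := by
              rintro ⟨i, hi⟩ ⟨j, hj⟩ h
              simp only [Fin.mk.injEq] at h
              exact Subtype.ext (Fin.ext h)
            simpa using Fintype.card_le_of_injective _ hinj
    · have hd : Matrix.diagonal σ
          - Matrix.diagonal (fun i : Fin d => if (i : ℕ) < r then σ i else 0)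
          = Matrix.diagonal (fun i : Fin d => if (i : ℕ) < r then 0 else σ i) := by
        rw [Matrix.diagonal_sub]
        have hfe : (fun i : Fin d => σ i - if (i : ℕ) < r then σ i else 0)
            = fun i : Fin d => if (i : ℕ) < r then 0 else σ i := by
          funext i
          by_cases h : (i : ℕ) < r <;> simp [h]
        rw [hfe]
      have hAM : A - U * Matrix.diagonal (fun i : Fin d => if (i : ℕ) < r then σ i else 0) * Vᵀ
          = U * Matrix.diagonal (fun i : Fin d => if (i : ℕ) < r then 0 else σ i) * Vᵀ := by
        rw [hA, ← Matrix.sub_mul, ← Matrix.mul_sub, hd]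
      rw [hAM, frob_eq_trace, frob_conj _ _ _ hU hV, Matrix.diagonal_transpose,
        Matrix.diagonal_mul_diagonal, Matrix.trace_diagonal, Finset.sum_filter]
      refine Finset.sum_congr rfl fun i _ => ?_
      by_cases h : (i : ℕ) < r
      · simp [h, Nat.not_le.mpr h]
      · simp [h, Nat.not_lt.mp h, sq]
  · -- lower bound
    rintro x ⟨M, hM, rfl⟩
    rw [frob_eq_trace]
    have hUU : U * Uᵀ = 1 := mul_eq_one_comm.mp hU
    have hVV : V * Vᵀ = 1 := mul_eq_one_comm.mp hV
    set B := Uᵀ * M * V with hB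
    have hMeq : U * B * Vᵀ = M := by
      rw [hB, show U * (Uᵀ * M * V) * Vᵀ = (U * Uᵀ) * M * (V * Vᵀ) from by noncomm_ring,
        hUU, hVV, one_mul, mul_one]
    have hAM : A - M = U * (Matrix.diagonal σ - B) * Vᵀ := by
      rw [hA, ← hMeq, Matrix.mul_sub, Matrix.sub_mul]
    rw [hAM, frob_conj _ _ _ hU hV]
    have hBr : B.rank ≤ r :=
      le_trans (le_trans (Matrix.rank_mul_le_left _ _) (Matrix.rank_mul_le_right _ _)) hM
    by_cases hrd : r < d
    · exact lower_bound hrd σ hσ hσ0 B hBr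
    · have hempty : Finset.univ.filter (fun j : Fin d => r ≤ (j : ℕ)) = ∅ := by
        ext j
        simp only [Finset.mem_filter, Finset.mem_univ, true_and, Finset.notMem_empty,
          iff_false]
        have := j.isLt
        omega
      rw [hempty, Finset.sum_empty, ← frob_eq_trace]
      positivity
end

section
/- Suppose r_*, r'_* are positive integers and d ≥ 1 with 2d r'_* + T'(T'−1)/2 = 2d r_* where T' ≤ r'_*. Then r_* − (√(d + r_*) − √d)² ≤ r'_* ≤ r_*. -/
/-- Lemma 2 (part 1): if `2d r'_* + T'(T'−1)/2 = 2d r_*` with `T' ≤ r'_*` and `d ≥ 1`,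
then `r_* − (√(d + r_*) − √d)² ≤ r'_* ≤ r_*`. -/
theorem rank_reduction_v1 (d rstar r' T' : ℕ)
    (hd : 1 ≤ d) (hr : 1 ≤ rstar) (hr' : 1 ≤ r') (hT : T' ≤ r')
    (hparam : (2 * d * r' : ℝ) + T' * (T' - 1) / 2 = 2 * d * rstar) :
    (rstar : ℝ) - (Real.sqrt (d + rstar) - Real.sqrt d) ^ 2 ≤ r' ∧ (r' : ℝ) ≤ rstar := by
  have hd1 : (1:ℝ) ≤ d := by exact_mod_cast hd
  have hTr : (T':ℝ) ≤ r' := by exact_mod_cast hT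
  have hT0 : (0:ℝ) ≤ T' := Nat.cast_nonneg _
  have hTT : (0:ℝ) ≤ (T':ℝ) * (T' - 1) := by
    rcases Nat.eq_zero_or_pos T' with h | h
    · simp [h]
    · have : (1:ℝ) ≤ T' := by exact_mod_cast h
      nlinarith
  have hr0 : (0:ℝ) ≤ r' := Nat.cast_nonneg _
  have hrs0 : (0:ℝ) ≤ rstar := Nat.cast_nonneg _
  constructor
  · -- lower bound
    have ha : Real.sqrt (d + rstar) ^ 2 = d + rstar := Real.sq_sqrt (by positivity)
    have hb : Real.sqrt d ^ 2 = (d:ℝ) := Real.sq_sqrt (by positivity)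
    have hab : Real.sqrt d * Real.sqrt (d + rstar) = Real.sqrt (d * (d + rstar)) :=
      (Real.sqrt_mul (by positivity) _).symm
    have hkey : (d:ℝ) * (d + rstar) ≤ (((r':ℝ) + 2 * d) / 2) ^ 2 := by
      nlinarith [sq_nonneg ((T':ℝ) - r')]
    have hsq : Real.sqrt (d * (d + rstar)) ≤ ((r':ℝ) + 2 * d) / 2 := by
      calc Real.sqrt (d * (d + rstar)) ≤ Real.sqrt ((((r':ℝ) + 2 * d) / 2) ^ 2) :=
            Real.sqrt_le_sqrt hkey
        _ = ((r':ℝ) + 2 * d) / 2 := Real.sqrt_sq (by positivity)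
    nlinarith [hsq, hab, ha, hb]
  · nlinarith
end

section
/- Suppose r_*, r''_* are positive integers with 2 r''_* + T''(T''−1)/2 = 2 r_* where T'' ≤ r''_*. Then r_* − (√(1 + r_*) − 1)² ≤ r''_* ≤ r_*. -/
/-- Lemma 2 (part 2): if `2 r''_* + T''(T''−1)/2 = 2 r_*` with `T'' ≤ r''_*`,
then `r_* − (√(1 + r_*) − 1)² ≤ r''_* ≤ r_*`. -/
theorem rank_reduction_v2 (rstar r'' T'' : ℕ)
    (hr : 1 ≤ rstar) (hr'' : 1 ≤ r'') (hT : T'' ≤ r'')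
    (hparam : (2 * r'' : ℝ) + T'' * (T'' - 1) / 2 = 2 * rstar) :
    (rstar : ℝ) - (Real.sqrt (1 + rstar) - 1) ^ 2 ≤ r'' ∧ (r'' : ℝ) ≤ rstar := by
  set s := Real.sqrt (1 + rstar) with hs
  have hs0 : (0:ℝ) ≤ s := Real.sqrt_nonneg _
  have hs2 : s ^ 2 = 1 + rstar := Real.sq_sqrt (by positivity)
  set t : ℝ := (T'' : ℝ) with htdef
  have ht0 : (0:ℝ) ≤ t := Nat.cast_nonneg _
  have hTr : t ≤ (r'' : ℝ) := Nat.cast_le.mpr hT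
  have htt : 0 ≤ t * (t - 1) := by
    rcases Nat.eq_zero_or_pos T'' with h | h
    · simp [htdef, h]
    · have : (1:ℝ) ≤ t := Nat.one_le_cast.mpr h
      nlinarith
  have hA : t ^ 2 + 3 * t ≤ 4 * rstar := by nlinarith
  have hBpos : (8:ℝ) ≤ 4 * rstar + 8 - t ^ 2 + t := by nlinarith
  have h1 : 0 ≤ (4 * (rstar:ℝ) + 8 - t ^ 2 + t) ^ 2 - 64 * s ^ 2 := by
    nlinarith [mul_nonneg (by linarith : (0:ℝ) ≤ 4 * rstar - t ^ 2 - 3 * t)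
      (by linarith : (0:ℝ) ≤ 4 * rstar - t ^ 2 + 5 * t)]
  have hkey : 8 * s ≤ 4 * rstar + 8 - t ^ 2 + t := by nlinarith
  constructor
  · nlinarith
  · nlinarith
end

section
/- Suppose r_*, r'''_* are positive integers with 2 r'''_* + T'''(T'''+1)/2 = 2 r_* and T''' ≤ r'''_*. Then r_* − (√(1.6 + r_*) − 1)² ≤ r'''_* < r_*. -/
/-- Lemma 2 (part 3): if `2 r'''_* + T'''(T'''+1)/2 = 2 r_*` with `1 ≤ T''' ≤ r'''_*`,
then `r_* − (√(1.6 + r_*) − 1)² ≤ r'''_* < r_*`. -/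
theorem rank_reduction_v3 (rstar r''' T''' : ℕ)
    (hr : 1 ≤ rstar) (hr''' : 1 ≤ r''') (hT1 : 1 ≤ T''') (hT : T''' ≤ r''')
    (hparam : (2 * r''' : ℝ) + T''' * (T''' + 1) / 2 = 2 * rstar) :
    (rstar : ℝ) - (Real.sqrt (1.6 + rstar) - 1) ^ 2 ≤ r''' ∧ (r''' : ℝ) < rstar := by
  set t : ℝ := (T''' : ℝ) with ht_def
  have ht1 : (1:ℝ) ≤ t := by rw [ht_def]; exact_mod_cast hT1
  have hr1 : (1:ℝ) ≤ (rstar:ℝ) := by exact_mod_cast hr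
  have hTr : t ≤ (r''':ℝ) := by rw [ht_def]; exact_mod_cast hT
  have hrd : (r''':ℝ) = rstar - t*(t+1)/4 := by linarith
  constructor
  · set s := Real.sqrt (25 + 16*(rstar:ℝ)) with hs_def
    have hs0 : 0 ≤ s := Real.sqrt_nonneg _
    have hs2 : s^2 = 25 + 16*(rstar:ℝ) := Real.sq_sqrt (by positivity)
    set q := Real.sqrt (1.6 + (rstar:ℝ)) with hq_def
    have hq0 : 0 ≤ q := Real.sqrt_nonneg _
    have hq2 : q^2 = 1.6 + (rstar:ℝ) := Real.sq_sqrt (by positivity)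
    have hts : 2*t + 5 ≤ s := by nlinarith [sq_nonneg (s - 2*t - 5)]
    have hs14 : (1.4:ℝ) ≤ s := by nlinarith
    have hqs : 4*q ≤ s + 0.2 := by nlinarith [sq_nonneg (s + 0.2 - 4*q)]
    rw [hq_def]
    nlinarith [mul_nonneg (by linarith : (0:ℝ) ≤ s - 5 - 2*t) (by linarith : (0:ℝ) ≤ t + 1),
      mul_nonneg (by linarith : (0:ℝ) ≤ s - 5 - 2*t) (by linarith : (0:ℝ) ≤ s - 3 - 2*t)]
  · nlinarith
end

section
/- Let 0 < λ_min ≤ λ_max, κ = λ_min/λ_max, d ≥ 1, r_* ≤ d, and r'_* ≥ r_* − (√(d+r_*) − √d)². Then the inequality r_* ≤ d κ² + r'_*(1 − κ²) holds whenever r_*/d ≤ (1 + κ(√(κ²+1) − κ))² − 1. -/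
/-- Algebraic core of Theorem 3(i) for GRN-v1: with `κ = λ_min/λ_max`, `d ≥ 1`,
`r_* ≤ d` and `r'_* ≥ r_* − (√(d+r_*) − √d)²`, the condition
`r_*/d ≤ (1 + κ(√(κ²+1) − κ))² − 1` implies `r_* ≤ d κ² + r'_*(1 − κ²)`. -/
theorem tradeoff_condition_v1 (lmin lmax d rstar r' : ℝ)
    (hlmin : 0 < lmin) (hl : lmin ≤ lmax)
    (hd : 1 ≤ d) (hrstar : 0 ≤ rstar) (hrd : rstar ≤ d)
    (hr' : rstar - (Real.sqrt (d + rstar) - Real.sqrt d) ^ 2 ≤ r')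
    (hcond : rstar / d ≤
      (1 + (lmin / lmax) * (Real.sqrt ((lmin / lmax) ^ 2 + 1) - lmin / lmax)) ^ 2 - 1) :
    rstar ≤ d * (lmin / lmax) ^ 2 + r' * (1 - (lmin / lmax) ^ 2) := by
  have hlmax : 0 < lmax := lt_of_lt_of_le hlmin hl
  set κ := lmin / lmax with hκdef
  have hκpos : 0 < κ := div_pos hlmin hlmax
  have hκ1 : κ ≤ 1 := by rw [hκdef, div_le_one hlmax]; exact hl
  have hdpos : (0:ℝ) < d := lt_of_lt_of_le one_pos hd
  set a := Real.sqrt (d + rstar) with hadef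
  set b := Real.sqrt d with hbdef
  set c := Real.sqrt (κ ^ 2 + 1) with hcdef
  have ha2 : a ^ 2 = d + rstar := Real.sq_sqrt (by linarith)
  have hb2 : b ^ 2 = d := Real.sq_sqrt (by linarith)
  have hc2 : c ^ 2 = κ ^ 2 + 1 := Real.sq_sqrt (by positivity)
  have ha0 : 0 ≤ a := Real.sqrt_nonneg _
  have hb0 : 0 ≤ b := Real.sqrt_nonneg _
  have hc0 : 0 ≤ c := Real.sqrt_nonneg _
  have hab : b ≤ a := Real.sqrt_le_sqrt (by linarith)
  have hcκ : κ ≤ c := by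
    have h := Real.sqrt_le_sqrt (show κ ^ 2 ≤ κ ^ 2 + 1 by linarith)
    rwa [Real.sqrt_sq hκpos.le] at h
  have hApos : 0 ≤ 1 + κ * (c - κ) := by nlinarith [hcκ, hκpos.le]
  have hA : a ≤ b * (1 + κ * (c - κ)) := by
    have h1 : rstar ≤ ((1 + κ * (c - κ)) ^ 2 - 1) * d := (div_le_iff₀ hdpos).mp hcond
    have h2 : d + rstar ≤ (b * (1 + κ * (c - κ))) ^ 2 := by
      have hx : (b * (1 + κ * (c - κ))) ^ 2 = d * (1 + κ * (c - κ)) ^ 2 := by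
        rw [mul_pow, hb2]
      rw [hx]; nlinarith [h1]
    calc a = Real.sqrt (d + rstar) := hadef
      _ ≤ Real.sqrt ((b * (1 + κ * (c - κ))) ^ 2) := Real.sqrt_le_sqrt h2
      _ = b * (1 + κ * (c - κ)) := Real.sqrt_sq (mul_nonneg hb0 hApos)
  have f1 : a - b * (1 - κ ^ 2) - b * κ * c ≤ 0 := by linarith [hA]
  have f2 : 0 ≤ a - b * (1 - κ ^ 2) + b * κ * c := by
    have p1 : 0 ≤ b * κ ^ 2 := mul_nonneg hb0 (sq_nonneg κ)
    have p2 : 0 ≤ b * κ * c := mul_nonneg (mul_nonneg hb0 hκpos.le) hc0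
    linarith [hab, p1, p2]
  have hbc : b ^ 2 * κ ^ 2 * c ^ 2 = d * κ ^ 4 + d * κ ^ 2 := by rw [hb2, hc2]; ring
  have ha2k : κ ^ 2 * a ^ 2 = κ ^ 2 * (d + rstar) := by rw [ha2]
  have hb2k : κ ^ 2 * b ^ 2 = κ ^ 2 * d := by rw [hb2]
  have hb4k : κ ^ 4 * b ^ 2 = κ ^ 4 * d := by rw [hb2]
  have prod := mul_nonpos_of_nonpos_of_nonneg f1 f2
  have key : (a - b) ^ 2 * (1 - κ ^ 2) ≤ κ ^ 2 * (d - rstar) := by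
    linarith [prod, hbc, ha2k, hb2k, hb4k]
  have h1κ : 0 ≤ 1 - κ ^ 2 := by nlinarith
  linarith [key, mul_le_mul_of_nonneg_right hr' h1κ]
end
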